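/- For each integer n ≥ 2 let f_n(z) = ((n+1)/(2n))·e^{nz} + ((n−1)/(2n))·e^{−nz} and h_n(z) = 1/f_n(z). Then the family H = {h_n : n = 2, 3, 4, …} of meromorphic functions on the unit disk is not normal on the unit disk, yet every h ∈ H satisfies the partial sharing condition h(z) ∈ {1, −1} ⟹ h′(z) ∈ {1, −1}, and every h ∈ H has no zeroes (so in particular all zeroes of every h ∈ H are multiple). -/

import Mathlib

/-!
Since `fₙ(z) = cosh (n z) + sinh (n z) / n`, its derivative satisfies `fₙ'² = 1 + n² (fₙ² - 1)`.
Hence wherever `hₙ = 1 / fₙ` equals `±1`, also `fₙ = ±1` and `hₙ' = -fₙ' / fₙ² = -fₙ' = ±1`.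

Every `hₙ` is holomorphic near `0` with `hₙ(0) = 1`, yet has a pole at
`pₙ = (log ((n - 1) / (n + 1)) + π i) / (2 n) → 0`. If a subsequence `h_{φ k}` converged
spherically uniformly near `0` to some `g`, then for a fixed `N` and large `m` the point
`g (p_{φ m})` would be chordally close both to `∞ = h_{φ m} (p_{φ m})` and to the value
`h_{φ N} (p_{φ m}) ≈ 1`, contradicting the triangle inequality.
-/

open Filter Topology
open scoped Classical

/-- The Riemann sphere `ℂ ∪ {∞}`. -/
inductive CSphere : Type where
  | finite (z : ℂ) : CSphere
  | infty : CSphere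

namespace CSphere

/-- Reciprocal of a complex number, landing on the Riemann sphere (`1/0 = ∞`). -/
noncomputable def sphInv (w : ℂ) : CSphere :=
  if w = 0 then infty else finite w⁻¹

/-- Finite part of a point of the sphere (junk value `0` at `∞`). -/
def finPart : CSphere → ℂ
  | finite w => w
  | infty => 0

/-- Modulus of a point of the sphere (junk value `0` at `∞`). -/
noncomputable def sphAbs : CSphere → ℝ
  | finite w => ‖w‖
  | infty => 0

/-- The chordal (spherical) distance on the Riemann sphere. -/
noncomputable def sphDist : CSphere → CSphere → ℝ
  | finite z, finite w => 2 * ‖z - w‖ / (Real.sqrt (1 + ‖z‖ ^ 2) * Real.sqrt (1 + ‖w‖ ^ 2))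
  | finite z, infty => 2 / Real.sqrt (1 + ‖z‖ ^ 2)
  | infty, finite w => 2 / Real.sqrt (1 + ‖w‖ ^ 2)
  | infty, infty => 0

end CSphere

open CSphere

/-- A sphere-valued function is meromorphic at a point `z` if, in a neighbourhood of `z`,
it is given by an analytic function, or is the reciprocal of an analytic function that is
not identically zero near `z` (so that a pole is an isolated point where the value is `∞`). -/
def MeroAt (f : ℂ → CSphere) (z : ℂ) : Prop :=
  (∃ g : ℂ → ℂ, AnalyticAt ℂ g z ∧ ∀ᶠ w in 𝓝 z, f w = finite (g w)) ∨
  (∃ g : ℂ → ℂ, AnalyticAt ℂ g z ∧ ¬ (∀ᶠ w in 𝓝 z, g w = 0) ∧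
    ∀ᶠ w in 𝓝 z, f w = sphInv (g w))

/-- A sphere-valued function is meromorphic on a set `D` if it is meromorphic
at every point of `D`. -/
def MeroOn (f : ℂ → CSphere) (D : Set ℂ) : Prop := ∀ z ∈ D, MeroAt f z

/-- `f` takes the value `c ∈ ℂ ∪ {∞}` at `z` with multiplicity at least `m`
(for `c = ∞` this says that `z` is a pole of order at least `m`). -/
def ValueMultAtLeast (f : ℂ → CSphere) (c : CSphere) (m : ℕ) (z : ℂ) : Prop :=
  match c with
  | finite a => ∃ g : ℂ → ℂ, AnalyticAt ℂ g z ∧ (∀ᶠ w in 𝓝 z, f w = finite (g w)) ∧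
      ∀ k < m, iteratedDeriv k (fun w => g w - a) z = 0
  | infty => ∃ g : ℂ → ℂ, AnalyticAt ℂ g z ∧ ¬ (∀ᶠ w in 𝓝 z, g w = 0) ∧
      (∀ᶠ w in 𝓝 z, f w = sphInv (g w)) ∧ ∀ k < m, iteratedDeriv k g z = 0

/-- The derivative of a sphere-valued meromorphic function: near a point with finite value
it is the derivative of the local analytic representative; at a pole (where the function is
not locally representable by an analytic function) the derivative again has a pole. -/
noncomputable def sphDeriv (f : ℂ → CSphere) (z : ℂ) : CSphere :=
  if h : ∃ g : ℂ → ℂ, AnalyticAt ℂ g z ∧ ∀ᶠ w in 𝓝 z, f w = finite (g w) then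
    finite (deriv h.choose z)
  else infty

/-- The spherical derivative `f^#(z) = |f′(z)|/(1+|f(z)|²)` of a meromorphic function,
computed at a pole through the local representative of `1/f`. -/
noncomputable def sphericalDerivative (f : ℂ → CSphere) (z : ℂ) : ℝ :=
  if h : ∃ g : ℂ → ℂ, AnalyticAt ℂ g z ∧ ∀ᶠ w in 𝓝 z, f w = finite (g w) then
    ‖deriv h.choose z‖ / (1 + ‖h.choose z‖ ^ 2)
  else if h' : ∃ g : ℂ → ℂ, AnalyticAt ℂ g z ∧ ∀ᶠ w in 𝓝 z, f w = sphInv (g w) then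
    ‖deriv h'.choose z‖ / (1 + ‖h'.choose z‖ ^ 2)
  else 0

/-- A sequence of sphere-valued functions converges to `g` spherically uniformly on
compact subsets of `D`. -/
def SphUnifConvOn (D : Set ℂ) (s : ℕ → ℂ → CSphere) (g : ℂ → CSphere) : Prop :=
  ∀ K : Set ℂ, K ⊆ D → IsCompact K →
    ∀ ε > 0, ∀ᶠ n in atTop, ∀ z ∈ K, sphDist (s n z) (g z) < ε

/-- A family `F` of sphere-valued (meromorphic) functions is normal on `D`:
every sequence in `F` has a subsequence converging spherically uniformly on
compact subsets of `D`. -/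
def NormalOn (F : Set (ℂ → CSphere)) (D : Set ℂ) : Prop :=
  ∀ s : ℕ → ℂ → CSphere, (∀ n, s n ∈ F) →
    ∃ φ : ℕ → ℕ, StrictMono φ ∧ ∃ g : ℂ → CSphere, SphUnifConvOn D (fun n => s (φ n)) g

/-- A family `F` is normal at a point `z₀` of `D` if it is normal on some
neighbourhood of `z₀` inside `D`. -/
def NormalAt (F : Set (ℂ → CSphere)) (D : Set ℂ) (z₀ : ℂ) : Prop :=
  ∃ U ∈ 𝓝 z₀, U ⊆ D ∧ NormalOn F U

/-- Positive part of the logarithm. -/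
noncomputable def posLog (x : ℝ) : ℝ := max (Real.log x) 0

/-- The order of the pole of `f` at `z` (`0` if `z` is not a pole). -/
noncomputable def poleOrd (f : ℂ → CSphere) (z : ℂ) : ℕ :=
  sSup {m : ℕ | ValueMultAtLeast f CSphere.infty m z}

/-- `n(t,f)`: the number of poles of `f` in the closed disk of radius `t`,
counted with multiplicity. -/
noncomputable def nCount (f : ℂ → CSphere) (t : ℝ) : ℝ :=
  ∑ᶠ z ∈ Metric.closedBall (0 : ℂ) t, (poleOrd f z : ℝ)

/-- The Nevanlinna counting function `N(r,f)`. -/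
noncomputable def NevN (f : ℂ → CSphere) (r : ℝ) : ℝ :=
  (∫ t in (0:ℝ)..r, (nCount f t - nCount f 0) / t) + nCount f 0 * Real.log r

/-- The Nevanlinna proximity function `m(r,f)`. -/
noncomputable def NevM (f : ℂ → CSphere) (r : ℝ) : ℝ :=
  (2 * Real.pi)⁻¹ *
    ∫ θ in (0:ℝ)..(2 * Real.pi), posLog (sphAbs (f ((r : ℂ) * Complex.exp ((θ : ℂ) * Complex.I))))

/-- The Nevanlinna characteristic `T(r,f) = m(r,f) + N(r,f)`. -/
noncomputable def NevT (f : ℂ → CSphere) (r : ℝ) : ℝ := NevM f r + NevN f r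

/-- The order `ρ(f) = limsup_{r → ∞} log T(r,f) / log r` of a meromorphic function on `ℂ`. -/
noncomputable def meroOrder (f : ℂ → CSphere) : EReal :=
  Filter.limsup (fun r : ℝ => ((Real.log (NevT f r) / Real.log r : ℝ) : EReal)) Filter.atTop

/-- `f` is a rational function: it is given everywhere on `ℂ` by a quotient `p/q` of
coprime polynomials, with value `∞` at the zeros of `q`. -/
def IsRationalFn (f : ℂ → CSphere) : Prop :=
  ∃ p q : Polynomial ℂ, q ≠ 0 ∧ IsCoprime p q ∧
    ∀ z : ℂ, f z = if q.eval z = 0 then CSphere.infty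
      else CSphere.finite (p.eval z / q.eval z)

/-- The value of the rational function `p/q` at the point `∞` of the Riemann sphere. -/
noncomputable def valueAtInfty (p q : Polynomial ℂ) : CSphere :=
  if q.natDegree < p.natDegree then CSphere.infty
  else if p.natDegree < q.natDegree then CSphere.finite 0
  else CSphere.finite (p.leadingCoeff / q.leadingCoeff)

/-- The multiplicity (local degree) with which the rational function `p/q` takes the
value `c` at the point `∞` of the Riemann sphere. -/
noncomputable def multAtInfty (p q : Polynomial ℂ) (c : CSphere) : ℕ :=
  match c with
  | CSphere.infty => max p.natDegree q.natDegree - q.natDegree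
  | CSphere.finite a => max p.natDegree q.natDegree - (p - Polynomial.C a * q).natDegree

/-- The maximum modulus `M(r,h) = max_{|z| = r} |h z|` of an entire function. -/
noncomputable def maxModulus (h : ℂ → ℂ) (r : ℝ) : ℝ :=
  sSup ((fun z => ‖h z‖) '' Metric.sphere (0 : ℂ) r)

/-- The order `limsup_{r → ∞} log log M(r,h) / log r` of an entire function. -/
noncomputable def entireOrder (h : ℂ → ℂ) : EReal :=
  Filter.limsup (fun r : ℝ => ((Real.log (Real.log (maxModulus h r)) / Real.log r : ℝ) : EReal))
    Filter.atTop

namespace CSphere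

theorem sphInv_zero : sphInv 0 = infty := if_pos rfl

theorem sphInv_of_ne_zero {w : ℂ} (hw : w ≠ 0) : sphInv w = finite w⁻¹ := if_neg hw

theorem sphInv_ne_finite_zero (w : ℂ) : sphInv w ≠ finite 0 := by
  by_cases hw : w = 0
  · simp [hw, sphInv_zero]
  · simpa [sphInv_of_ne_zero hw] using hw

theorem sphInv_eq_finite_iff {w c : ℂ} (hc : c ≠ 0) : sphInv w = finite c ↔ w = c⁻¹ := by
  by_cases hw : w = 0
  · simp [hw, sphInv_zero, Ne.symm hc]
  · rw [sphInv_of_ne_zero hw, finite.injEq, inv_eq_iff_eq_inv]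

theorem eventually_sphInv_eq_finite {F : ℂ → ℂ} {z : ℂ} (hF : ContinuousAt F z) (hz : F z ≠ 0) :
    ∀ᶠ w in 𝓝 z, sphInv (F w) = finite (F w)⁻¹ :=
  (hF.eventually_ne hz).mono fun _ hw => sphInv_of_ne_zero hw

theorem sphDist_finite_infty_le (w : ℂ) (c : CSphere) :
    sphDist (finite w) infty ≤ sphDist (finite w) c + sphDist infty c := by
  cases c with
  | infty => simp [sphDist]
  | finite v =>
    simp only [sphDist]
    set A := Real.sqrt (1 + ‖w‖ ^ 2)
    set B := Real.sqrt (1 + ‖v‖ ^ 2)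
    have hA : 0 < A := by positivity
    have hB : 0 < B := by positivity
    have hA2 : A ^ 2 = 1 + ‖w‖ ^ 2 := Real.sq_sqrt (by positivity)
    have hB2 : B ^ 2 = 1 + ‖v‖ ^ 2 := Real.sq_sqrt (by positivity)
    -- `t ↦ √(1 + t²)` is 1-Lipschitz
    have hBA : B ≤ A + ‖w - v‖ := by
      have hvw : ‖v‖ ≤ ‖w‖ + ‖w - v‖ := by
        simpa [norm_sub_rev] using norm_le_norm_add_norm_sub' v w
      have hwA : ‖w‖ ≤ A := by nlinarith [norm_nonneg w]
      rw [← Real.sqrt_sq (by positivity : 0 ≤ A + ‖w - v‖)]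
      refine Real.sqrt_le_sqrt ?_
      nlinarith [norm_nonneg v, norm_nonneg (w - v),
        mul_le_mul_of_nonneg_right hwA (norm_nonneg (w - v))]
    rw [div_add_div _ _ (by positivity) hB.ne', div_le_div_iff₀ hA (by positivity)]
    nlinarith [mul_pos hA hB]

end CSphere

open CSphere

theorem sphDeriv_eq_of_eventually_eq_finite {f : ℂ → CSphere} {g : ℂ → ℂ} {z : ℂ}
    (hg : AnalyticAt ℂ g z) (hfg : ∀ᶠ w in 𝓝 z, f w = finite (g w)) :
    sphDeriv f z = finite (deriv g z) := by
  have hex : ∃ g : ℂ → ℂ, AnalyticAt ℂ g z ∧ ∀ᶠ w in 𝓝 z, f w = finite (g w) := ⟨g, hg, hfg⟩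
  rw [sphDeriv, dif_pos hex, finite.injEq]
  refine Filter.EventuallyEq.deriv_eq ?_
  filter_upwards [hex.choose_spec.2, hfg] with w hchoose hw
  exact finite.inj (hchoose.symm.trans hw)

theorem sphDeriv_sphInv_comp {F : ℂ → ℂ} {z : ℂ} (hF : AnalyticAt ℂ F z) (hz : F z ≠ 0) :
    sphDeriv (fun w => sphInv (F w)) z = finite (-deriv F z / F z ^ 2) := by
  rw [sphDeriv_eq_of_eventually_eq_finite (hF.inv hz)
    (eventually_sphInv_eq_finite hF.continuousAt hz), (hF.differentiableAt.hasDerivAt.inv hz).deriv]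

theorem not_sphUnifConvOn_of_poles_tendsto {D : Set ℂ} {z₀ c : ℂ} (hD : D ∈ 𝓝 z₀)
    {s : ℕ → ℂ → CSphere} {a : ℕ → ℂ → ℂ} (ha : ∀ n, ContinuousAt (a n) z₀)
    (ha₀ : ∀ n, a n z₀ = c) (hsa : ∀ n, ∀ᶠ w in 𝓝 z₀, s n w = finite (a n w))
    {p : ℕ → ℂ} (hp : Tendsto p atTop (𝓝 z₀)) (hpole : ∀ n, s n (p n) = infty)
    (g : ℂ → CSphere) : ¬ SphUnifConvOn D s g := by
  intro hconv
  obtain ⟨r, hr, hrD⟩ := Metric.nhds_basis_closedBall.mem_iff.1 hD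
  set δ := sphDist (finite c) infty
  have hδ : 0 < δ := by simp only [δ, sphDist]; positivity
  obtain ⟨N, hN⟩ :=
    eventually_atTop.1 (hconv _ hrD (isCompact_closedBall _ _) (δ / 4) (by positivity))
  have hdist : Continuous fun x : ℂ => sphDist (finite x) infty := by
    simp only [sphDist]
    exact continuous_const.div (by fun_prop) fun x => by positivity
  have hfar : Tendsto (fun m => sphDist (finite (a N (p m))) infty) atTop (𝓝 δ) := by
    have h := hdist.continuousAt.tendsto.comp ((ha N).tendsto.comp hp)
    rwa [ha₀ N] at h
  obtain ⟨m, hmfar, hmeq, hmK, hmN⟩ := ((hfar.eventually (lt_mem_nhds (half_lt_self hδ))).and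
    ((hp.eventually (hsa N)).and ((hp.eventually (Metric.closedBall_mem_nhds z₀ hr)).and
      (eventually_ge_atTop N)))).exists
  have hN_near := hN N le_rfl (p m) hmK
  have hm_near := hN m hmN (p m) hmK
  rw [hmeq] at hN_near
  rw [hpole] at hm_near
  linarith [sphDist_finite_infty_le (a N (p m)) (g (p m))]

noncomputable def expFamily (n z : ℂ) : ℂ :=
  ((n + 1) / (2 * n)) * Complex.exp (n * z) + ((n - 1) / (2 * n)) * Complex.exp (-(n * z))

noncomputable def expFamilyDeriv (n z : ℂ) : ℂ :=
  ((n + 1) / 2) * Complex.exp (n * z) - ((n - 1) / 2) * Complex.exp (-(n * z))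

theorem differentiable_expFamily (n : ℂ) : Differentiable ℂ (expFamily n) := by
  unfold expFamily
  fun_prop

theorem hasDerivAt_expFamily {n : ℂ} (hn : n ≠ 0) (z : ℂ) :
    HasDerivAt (expFamily n) (expFamilyDeriv n z) z := by
  have hlin : HasDerivAt (fun w => n * w) n z := by simpa using (hasDerivAt_id z).const_mul n
  refine ((hlin.cexp.const_mul ((n + 1) / (2 * n))).add
    (hlin.neg.cexp.const_mul ((n - 1) / (2 * n)))).congr_deriv ?_
  simp only [expFamilyDeriv, Pi.neg_apply]
  field_simp
  ring

theorem expFamily_zero {n : ℂ} (hn : n ≠ 0) : expFamily n 0 = 1 := by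
  simp only [expFamily, mul_zero, neg_zero, Complex.exp_zero, mul_one]
  field_simp
  ring

theorem expFamilyDeriv_sq {n : ℂ} (hn : n ≠ 0) (z : ℂ) :
    expFamilyDeriv n z ^ 2 = 1 + n ^ 2 * (expFamily n z ^ 2 - 1) := by
  have hexp : Complex.exp (n * z) * Complex.exp (-(n * z)) = 1 := by
    rw [← Complex.exp_add, add_neg_cancel, Complex.exp_zero]
  unfold expFamily expFamilyDeriv
  field_simp
  linear_combination 4 * (1 - n ^ 2) * hexp

noncomputable def expFamilyRoot (t : ℝ) : ℂ :=
  (Real.log ((t - 1) / (t + 1)) + Real.pi * Complex.I) / (2 * t)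

theorem expFamily_expFamilyRoot {t : ℝ} (ht : 1 < t) : expFamily t (expFamilyRoot t) = 0 := by
  have ht0 : (t : ℂ) ≠ 0 := Complex.ofReal_ne_zero.2 (by linarith)
  have htp : (t : ℂ) + 1 ≠ 0 := by exact_mod_cast (by linarith : t + 1 ≠ 0)
  set u := Complex.exp (t * expFamilyRoot t)
  have hu : ((t : ℂ) + 1) * u ^ 2 = -((t : ℂ) - 1) := by
    have h2 : 2 * (t * expFamilyRoot t) = Real.log ((t - 1) / (t + 1)) + Real.pi * Complex.I := by
      unfold expFamilyRoot
      field_simp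
    rw [← Complex.exp_nat_mul, Nat.cast_ofNat, h2, Complex.exp_add, Complex.exp_pi_mul_I,
      ← Complex.ofReal_exp, Real.exp_log (div_pos (by linarith) (by linarith))]
    push_cast
    field_simp
  unfold expFamily
  rw [Complex.exp_neg]
  field_simp
  linear_combination hu

theorem tendsto_expFamilyRoot : Tendsto expFamilyRoot atTop (𝓝 0) := by
  have hinv : Tendsto (fun t : ℝ => (t + 1)⁻¹) atTop (𝓝 0) :=
    tendsto_inv_atTop_zero.comp (tendsto_atTop_add_const_right _ 1 tendsto_id)
  have hratio : Tendsto (fun t : ℝ => (t - 1) / (t + 1)) atTop (𝓝 1) := by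
    have h := (tendsto_const_nhds (x := (1 : ℝ))).sub (hinv.const_mul 2)
    rw [mul_zero, sub_zero] at h
    refine h.congr' ?_
    filter_upwards [eventually_gt_atTop 0] with t ht
    field_simp
    ring
  have hlog : Tendsto (fun t : ℝ => ((Real.log ((t - 1) / (t + 1)) : ℂ) + Real.pi * Complex.I))
      atTop (𝓝 (0 + Real.pi * Complex.I)) := by
    have h := (Real.continuousAt_log one_ne_zero).tendsto.comp hratio
    rw [Real.log_one] at h
    have h' := (Complex.continuous_ofReal.tendsto 0).comp h
    rw [Complex.ofReal_zero] at h'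
    exact h'.add_const _
  have hscale : Tendsto (fun t : ℝ => (2 * (t : ℂ))⁻¹) atTop (𝓝 0) := by
    have h := (Complex.continuous_ofReal.tendsto 0).comp
      (tendsto_inv_atTop_zero.comp (tendsto_id.const_mul_atTop two_pos))
    rw [Complex.ofReal_zero] at h
    refine h.congr fun t => ?_
    simp
  have h := hlog.mul hscale
  rw [mul_zero] at h
  exact h.congr fun t => (div_eq_mul_inv _ _).symm

theorem sphDeriv_sphInv_expFamily_of_sq_eq_one {n z : ℂ} (hn : n ≠ 0)
    (hz : expFamily n z ^ 2 = 1) :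
    sphDeriv (fun w => sphInv (expFamily n w)) z = finite 1 ∨
      sphDeriv (fun w => sphInv (expFamily n w)) z = finite (-1) := by
  have hz0 : expFamily n z ≠ 0 := fun h => by simp [h] at hz
  rw [sphDeriv_sphInv_comp ((differentiable_expFamily n).analyticAt z) hz0,
    (hasDerivAt_expFamily hn z).deriv, hz, div_one]
  have hsq : (-expFamilyDeriv n z) ^ 2 = 1 := by rw [neg_sq, expFamilyDeriv_sq hn, hz]; ring
  rcases sq_eq_one_iff.1 hsq with h | h <;> simp [h]

theorem not_normalOn_sphInv_expFamily :
    ¬ NormalOn {g : ℂ → CSphere | ∃ n : ℕ, 2 ≤ n ∧ g = fun z => sphInv (expFamily n z)}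
      (Metric.ball 0 1) := by
  intro hnormal
  obtain ⟨φ, hφ, g, hconv⟩ :=
    hnormal (fun k z => sphInv (expFamily ((k + 2 : ℕ) : ℂ) z)) fun k => ⟨k + 2, by omega, rfl⟩
  have hn0 : ∀ k, ((φ k + 2 : ℕ) : ℂ) ≠ 0 := fun k => by exact_mod_cast (by omega : φ k + 2 ≠ 0)
  have hval : ∀ k, expFamily ((φ k + 2 : ℕ) : ℂ) 0 = 1 := fun k => expFamily_zero (hn0 k)
  have hcont : ∀ k, ContinuousAt (fun w => expFamily ((φ k + 2 : ℕ) : ℂ) w) 0 :=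
    fun k => (differentiable_expFamily _).continuous.continuousAt
  have hidx : Tendsto (fun k => ((φ k + 2 : ℕ) : ℝ)) atTop atTop :=
    tendsto_natCast_atTop_atTop.comp ((tendsto_add_atTop_nat 2).comp hφ.tendsto_atTop)
  refine not_sphUnifConvOn_of_poles_tendsto (Metric.ball_mem_nhds 0 one_pos)
    (a := fun k w => (expFamily ((φ k + 2 : ℕ) : ℂ) w)⁻¹) (c := 1)
    (fun k => (hcont k).inv₀ (by rw [hval k]; exact one_ne_zero))
    (fun k => by simp only [hval k, inv_one])
    (fun k => eventually_sphInv_eq_finite (hcont k) (by rw [hval k]; exact one_ne_zero))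
    (tendsto_expFamilyRoot.comp hidx) (fun k => ?_) g hconv
  have hroot := expFamily_expFamilyRoot (t := ((φ k + 2 : ℕ) : ℝ)) (by norm_cast; omega)
  rw [Complex.ofReal_natCast] at hroot
  simp only [Function.comp_apply, hroot, sphInv_zero]

/-- With `fₙ(z) = ((n+1)/(2n)) eⁿᶻ + ((n−1)/(2n)) e⁻ⁿᶻ` and `hₙ = 1/fₙ`, the family
`H = {hₙ : n ≥ 2}` of meromorphic functions on the unit disk is not normal, yet every
`hₙ` satisfies `hₙ(z) ∈ {1, −1} ⟹ hₙ′(z) ∈ {1, −1}` and has no zeros (so all its zeros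
are trivially multiple). -/
theorem reciprocal_family_counterexample (f : ℕ → ℂ → ℂ) (h : ℕ → ℂ → CSphere)
    (hf : ∀ n : ℕ, ∀ z : ℂ, f n z =
      (((n : ℂ) + 1) / (2 * (n : ℂ))) * Complex.exp ((n : ℂ) * z) +
      (((n : ℂ) - 1) / (2 * (n : ℂ))) * Complex.exp (-((n : ℂ) * z)))
    (hh : ∀ n : ℕ, ∀ z : ℂ, h n z = if f n z = 0 then CSphere.infty
      else CSphere.finite (f n z)⁻¹) :
    ¬ NormalOn {g : ℂ → CSphere | ∃ n : ℕ, 2 ≤ n ∧ g = h n} (Metric.ball (0 : ℂ) 1) ∧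
    (∀ n : ℕ, 2 ≤ n → ∀ z ∈ Metric.ball (0 : ℂ) 1,
      (h n z = CSphere.finite 1 ∨ h n z = CSphere.finite (-1)) →
      (sphDeriv (h n) z = CSphere.finite 1 ∨ sphDeriv (h n) z = CSphere.finite (-1))) ∧
    (∀ n : ℕ, 2 ≤ n → ∀ z ∈ Metric.ball (0 : ℂ) 1, h n z ≠ CSphere.finite 0) := by
  obtain rfl : h = fun (n : ℕ) z => sphInv (expFamily n z) := by
    funext n z
    rw [hh, hf]
    rfl
  refine ⟨not_normalOn_sphInv_expFamily, ?_, fun n _ z _ => sphInv_ne_finite_zero _⟩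
  rintro n hn z - hvalue
  refine sphDeriv_sphInv_expFamily_of_sq_eq_one (by exact_mod_cast (by omega : n ≠ 0)) ?_
  rcases hvalue with hone | hone <;>
    rw [sphInv_eq_finite_iff (by norm_num)] at hone <;> simp [hone]
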